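/- (Block Laplace expansion) Let m be even and l, n positive integers, and A an m-dimensional tensor of size ln. For any sequence I = (i₁,…,i_{ln}) ∈ [ln]^{ln} with l-block decomposition I = (I₁,…,I_n), one has det^[m] A_{[ln],…,[ln],I} = ∑_{σ^(1),…,σ^(m-1)} sgn(σ^(1))⋯sgn(σ^(m-1)) ∏_{j=1}^n det^[m] A_{σ^(1)_j,…,σ^(m-1)_j, I_j}, where each σ^(k) runs over permutations of [ln] whose n consecutive blocks of length l are each increasing, and σ^(k)_j denotes the j-th block of σ^(k). -/

import Mathlib

open scoped Classical
open Finset Equiv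

noncomputable section

variable {F : Type*} [Field F] [CharZero F]

/-- The hyperdeterminant `det^[m]` of an `m`-dimensional tensor of size `n`:
`∑_{σ₁,…,σ_{m-1}} sgn(σ₁⋯σ_{m-1}) ∏_i A(i, σ₁ i, …, σ_{m-1} i)`, encoded as a sum over
`m`-tuples of permutations whose `0`-th component is forced to be the identity. -/
def hyperdet (m n : ℕ) (A : (Fin m → Fin n) → F) : F :=
  ∑ σ : Fin m → Equiv.Perm (Fin n),
    if (∀ k : Fin m, k.1 = 0 → σ k = 1) then
      (∏ k, ((Equiv.Perm.sign (σ k) : ℤ) : F)) * ∏ i, A fun k => σ k i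
    else 0

/-- `blk l n j i` is the `i`-th entry of the `j`-th consecutive block of length `l` in `[l*n]`. -/
def blk (l n : ℕ) (j : Fin n) (i : Fin l) : Fin (l * n) :=
  ⟨j.1 * l + i.1, by
    have hi := i.2; have hj := j.2
    calc j.1 * l + i.1 < (j.1 + 1) * l := by rw [Nat.add_mul, Nat.one_mul]; omega
      _ ≤ n * l := Nat.mul_le_mul_right l hj
      _ = l * n := Nat.mul_comm n l⟩

/-- A permutation of `[l*n]` is block-increasing if it is increasing on each of the
`n` consecutive blocks of length `l`. -/
def BlockInc (l n : ℕ) (σ : Equiv.Perm (Fin (l * n))) : Prop :=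
  ∀ j : Fin n, StrictMono fun i : Fin l => σ (blk l n j i)

/-- The `j`-th block of `σ`, as a subset of `[l*n]`. -/
def blkSet (l n : ℕ) (σ : Equiv.Perm (Fin (l * n))) (j : Fin n) : Finset (Fin (l * n)) :=
  Finset.image (fun i => σ (blk l n j i)) Finset.univ

/-- The hyperpfaffian `Pf^[l,m]` of an `m`-dimensional `l`-block array of size `l*n`
(the `m` dimensions are indexed by an arbitrary finite type `ι`). -/
def hyperpf (l n : ℕ) {ι : Type*} [Fintype ι]
    (B : (ι → Finset (Fin (l * n))) → F) : F :=
  (n.factorial : F)⁻¹ *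
    ∑ σ : ι → Equiv.Perm (Fin (l * n)),
      if ∀ s, BlockInc l n (σ s) then
        (∏ s, ((Equiv.Perm.sign (σ s) : ℤ) : F)) *
          ∏ k : Fin n, B fun s => blkSet l n (σ s) k
      else 0

/-- The hyperhafnian `Hf^[l,m]` (same sum as the hyperpfaffian, without signs). -/
def hyperhf (l n : ℕ) {ι : Type*} [Fintype ι]
    (B : (ι → Finset (Fin (l * n))) → F) : F :=
  (n.factorial : F)⁻¹ *
    ∑ σ : ι → Equiv.Perm (Fin (l * n)),
      if ∀ s, BlockInc l n (σ s) then
        ∏ k : Fin n, B fun s => blkSet l n (σ s) k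
      else 0

/-! For even `m` the hyperdeterminant does not depend on which slot is normalised to the identity
permutation: multiplying all `m` permutations on the right by a common `τ` only reindexes the
product and multiplies the sign by `sgn(τ)^m = 1`. Normalise at the last slot, where `I` sits.
Every permutation of `[l*n]` factors uniquely as a block-increasing permutation followed by a
permutation preserving each block (sort the values on each block), and the sign is multiplicative.
Factoring the remaining `m - 1` permutations this way splits each term into a block-increasing
outer part and, for every block, a term of an `l`-size hyperdeterminant normalised at the last slot.
-/

section Blocks

variable {l n : ℕ}

def blockEquiv (l n : ℕ) : Fin n × Fin l ≃ Fin (l * n) :=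
  finProdFinEquiv.trans (finCongr (Nat.mul_comm n l))

@[simp]
lemma blockEquiv_apply (j : Fin n) (i : Fin l) : blockEquiv l n (j, i) = blk l n j i :=
  Fin.ext (by simp [blockEquiv, blk]; ring)

lemma prod_eq_prod_blk {M : Type*} [CommMonoid M] (f : Fin (l * n) → M) :
    ∏ x, f x = ∏ j, ∏ i, f (blk l n j i) := by
  rw [← (blockEquiv l n).prod_comp, Fintype.prod_prod_type]
  simp

lemma blk_strictMono (j : Fin n) : StrictMono (blk l n j) := fun a b h => by
  simp only [blk, Fin.mk_lt_mk]
  exact Nat.add_lt_add_left h _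

lemma blockInc_one : BlockInc l n 1 := blk_strictMono

def blockPerm (l n : ℕ) : (Fin n → Perm (Fin l)) →* Perm (Fin (l * n)) :=
  (blockEquiv l n).permCongrHom.toMonoidHom.comp
    { toFun := Equiv.prodCongrRight
      map_one' := rfl
      map_mul' := fun _ _ => rfl }

lemma blockPerm_apply (r : Fin n → Perm (Fin l)) :
    blockPerm l n r = (blockEquiv l n).permCongr (prodCongrRight r) :=
  rfl

@[simp]
lemma blockPerm_apply_blk (r : Fin n → Perm (Fin l)) (j : Fin n) (i : Fin l) :
    blockPerm l n r (blk l n j i) = blk l n j (r j i) := by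
  simp [blockPerm_apply, ← blockEquiv_apply, Equiv.permCongr_apply]

lemma sign_blockPerm (r : Fin n → Perm (Fin l)) :
    Perm.sign (blockPerm l n r) = ∏ j, Perm.sign (r j) := by
  rw [blockPerm_apply, Perm.sign_permCongr, Perm.sign_prodCongrRight]

lemma eq_one_of_blockInc_mul_blockPerm {σ : Perm (Fin (l * n))} {r : Fin n → Perm (Fin l)}
    (hσ : BlockInc l n σ) (h : BlockInc l n (σ * blockPerm l n r)) : r = 1 := by
  funext j
  have hr : StrictMono (r j) := fun a b hab => (hσ j).lt_iff_lt.1 (by simpa using h j hab)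
  have : ⇑(r j) = id := (hr.range_inj strictMono_id).1 (by simp [(r j).surjective.range_eq])
  exact Equiv.ext (congrFun this)

lemma BlockInc.mul_blockPerm_inj {σ σ' : Perm (Fin (l * n))} {r r' : Fin n → Perm (Fin l)}
    (hσ : BlockInc l n σ) (hσ' : BlockInc l n σ')
    (h : σ * blockPerm l n r = σ' * blockPerm l n r') : σ = σ' ∧ r = r' := by
  have hσσ' : σ = σ' * blockPerm l n (r' * r⁻¹) := by
    rw [map_mul, map_inv, ← mul_assoc, ← h, mul_inv_cancel_right]
  have hrr' : r' * r⁻¹ = 1 := eq_one_of_blockInc_mul_blockPerm hσ' (hσσ' ▸ hσ)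
  rw [mul_inv_eq_one] at hrr'
  exact ⟨by rw [hσσ', hrr', mul_inv_cancel, map_one, mul_one], hrr'.symm⟩

end Blocks

section Factorization

variable {l n : ℕ}

def blockSort (π : Perm (Fin (l * n))) (j : Fin n) : Perm (Fin l) :=
  Tuple.sort fun i => π (blk l n j i)

def blockIncFactor (π : Perm (Fin (l * n))) : Perm (Fin (l * n)) :=
  π * blockPerm l n (blockSort π)

def blockPermFactor (π : Perm (Fin (l * n))) : Fin n → Perm (Fin l) :=
  (blockSort π)⁻¹

lemma blockIncFactor_mul_blockPermFactor (π : Perm (Fin (l * n))) :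
    blockIncFactor π * blockPerm l n (blockPermFactor π) = π := by
  rw [blockIncFactor, blockPermFactor, map_inv, mul_inv_cancel_right]

lemma blockInc_blockIncFactor (π : Perm (Fin (l * n))) : BlockInc l n (blockIncFactor π) := by
  intro j
  have hmono := Tuple.monotone_sort fun i => π (blk l n j i)
  refine Monotone.strictMono_of_injective ?_
    ((blockIncFactor π).injective.comp (blk_strictMono j).injective)
  convert hmono using 1
  funext i
  simp [blockIncFactor, blockSort]

lemma blockFactors_mul_blockPerm {σ : Perm (Fin (l * n))} (hσ : BlockInc l n σ)
    (r : Fin n → Perm (Fin l)) :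
    blockIncFactor (σ * blockPerm l n r) = σ ∧ blockPermFactor (σ * blockPerm l n r) = r :=
  (blockInc_blockIncFactor _).mul_blockPerm_inj hσ (blockIncFactor_mul_blockPermFactor _)

lemma blockFactors_one :
    blockIncFactor (1 : Perm (Fin (l * n))) = 1 ∧ blockPermFactor (1 : Perm (Fin (l * n))) = 1 := by
  simpa using blockFactors_mul_blockPerm (blockInc_one (l := l) (n := n)) 1

end Factorization

section HyperdetAt

variable {R : Type*} [CommRing R] {m N : ℕ}

def hyperdetAt (b : Fin m) (B : (Fin m → Fin N) → R) : R :=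
  ∑ σ : Fin m → Perm (Fin N),
    if σ b = 1 then (∏ k, ((Perm.sign (σ k) : ℤ) : R)) * ∏ x, B fun k => σ k x else 0

lemma hyperdet_eq_hyperdetAt {K : Type*} [Field K] (hm : 0 < m) (B : (Fin m → Fin N) → K) :
    hyperdet m N B = hyperdetAt ⟨0, hm⟩ B := by
  refine Finset.sum_congr rfl fun σ _ => if_congr ?_ rfl rfl
  exact ⟨fun h => h _ rfl, fun h k hk => (Fin.ext hk : k = ⟨0, hm⟩) ▸ h⟩

lemma prod_sign_mul_right_of_even (hm : Even m) (σ : Fin m → Perm (Fin N)) (τ : Perm (Fin N)) :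
    ∏ k, ((Perm.sign (σ k * τ) : ℤ) : R) = ∏ k, ((Perm.sign (σ k) : ℤ) : R) := by
  have hsign : ∏ k, Perm.sign (σ k * τ) = ∏ k, Perm.sign (σ k) := by
    obtain ⟨t, rfl⟩ := hm
    simp [Perm.sign_mul, prod_mul_distrib, ← two_mul, pow_mul, Int.units_sq]
  simpa only [Units.coe_prod, Int.cast_prod] using congrArg (fun u : ℤˣ => ((u : ℤ) : R)) hsign

theorem hyperdetAt_eq_of_even (hm : Even m) (a b : Fin m) (B : (Fin m → Fin N) → R) :
    hyperdetAt a B = hyperdetAt b B := by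
  simp only [hyperdetAt, ← Finset.sum_filter]
  refine Finset.sum_nbij' (fun σ k => σ k * (σ b)⁻¹) (fun ν k => ν k * (ν a)⁻¹) ?_ ?_ ?_ ?_ ?_
  · simp
  · simp
  · intro σ hσ
    simp only [mem_filter, mem_univ, true_and] at hσ
    simp [hσ]
  · intro ν hν
    simp only [mem_filter, mem_univ, true_and] at hν
    simp [hν]
  · intro σ _
    rw [prod_sign_mul_right_of_even hm]
    exact congrArg _ (Equiv.prod_comp (σ b)⁻¹ fun x => B fun k => σ k x).symm

lemma prod_hyperdetAt {ι : Type*} [Fintype ι] [DecidableEq ι] (b : Fin m)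
    (B : ι → (Fin m → Fin N) → R) :
    ∏ j, hyperdetAt b (B j) = ∑ T : ι → Fin m → Perm (Fin N),
      if ∀ j, T j b = 1 then
        ∏ j, ((∏ k, ((Perm.sign (T j k) : ℤ) : R)) * ∏ x, B j fun k => T j k x)
      else 0 := by
  simp only [hyperdetAt, Fintype.prod_sum, Fintype.prod_ite_zero]

end HyperdetAt

section BlockExpansion

variable {R : Type*} [CommRing R] {m l n : ℕ}

lemma hyperdetAt_term_mul_blockPerm (σ : Fin m → Perm (Fin (l * n)))
    (T : Fin n → Fin m → Perm (Fin l)) (B : (Fin m → Fin (l * n)) → R) :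
    (∏ k, ((Perm.sign (σ k * blockPerm l n fun j => T j k) : ℤ) : R)) *
        ∏ x, B (fun k => (σ k * blockPerm l n fun j => T j k) x)
      = (∏ k, ((Perm.sign (σ k) : ℤ) : R)) *
          ∏ j, ((∏ k, ((Perm.sign (T j k) : ℤ) : R)) *
            ∏ i, B fun k => σ k (blk l n j (T j k i))) := by
  simp only [Perm.sign_mul, sign_blockPerm, Units.val_mul, Units.coe_prod, Int.cast_mul,
    Int.cast_prod, prod_mul_distrib, Perm.mul_apply]
  rw [prod_comm (s := univ) (t := univ) (f := fun k j => ((Perm.sign (T j k) : ℤ) : R)),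
    prod_eq_prod_blk]
  simp only [blockPerm_apply_blk]
  ring

theorem hyperdetAt_eq_sum_blockInc (b : Fin m) (B : (Fin m → Fin (l * n)) → R) :
    hyperdetAt b B = ∑ σ : Fin m → Perm (Fin (l * n)),
      if (∀ s, BlockInc l n (σ s)) ∧ σ b = 1 then
        (∏ s, ((Perm.sign (σ s) : ℤ) : R)) *
          ∏ j : Fin n, hyperdetAt b (fun a : Fin m → Fin l => B fun k => σ k (blk l n j (a k)))
      else 0 := by
  have expand : ∀ σ : Fin m → Perm (Fin (l * n)),
      (if (∀ s, BlockInc l n (σ s)) ∧ σ b = 1 then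
        (∏ s, ((Perm.sign (σ s) : ℤ) : R)) *
          ∏ j : Fin n, hyperdetAt b (fun a : Fin m → Fin l => B fun k => σ k (blk l n j (a k)))
      else 0) = ∑ T : Fin n → Fin m → Perm (Fin l),
        if ((∀ s, BlockInc l n (σ s)) ∧ σ b = 1) ∧ ∀ j, T j b = 1 then
          (∏ s, ((Perm.sign (σ s) : ℤ) : R)) * ∏ j, ((∏ k, ((Perm.sign (T j k) : ℤ) : R)) *
            ∏ i, B fun k => σ k (blk l n j (T j k i)))
        else 0 := by
    intro σ
    split_ifs with hσ
    · simp only [prod_hyperdetAt, mul_sum, mul_ite, mul_zero, hσ, implies_true, and_self, true_and]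
    · simp [hσ]
  rw [Finset.sum_congr rfl fun σ _ => expand σ, ← Fintype.sum_prod_type', hyperdetAt]
  simp only [← Finset.sum_filter]
  symm
  refine Finset.sum_nbij' (fun p k => p.1 k * blockPerm l n fun j => p.2 j k)
    (fun ν => (fun k => blockIncFactor (ν k), fun j k => blockPermFactor (ν k) j))
    ?_ ?_ ?_ ?_ ?_
  · rintro ⟨σ, T⟩ h
    simp only [mem_filter, mem_univ, true_and] at h ⊢
    rw [h.1.2, one_mul, show (fun j => T j b) = 1 from funext h.2, map_one]
  · intro ν h
    simp only [mem_filter, mem_univ, true_and] at h ⊢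
    rw [h]
    exact ⟨⟨fun s => blockInc_blockIncFactor _, blockFactors_one.1⟩, congrFun blockFactors_one.2⟩
  · rintro ⟨σ, T⟩ h
    simp only [mem_filter, mem_univ, true_and] at h
    have hfac k := blockFactors_mul_blockPerm (h.1.1 k) fun j => T j k
    exact Prod.ext (funext fun k => (hfac k).1)
      (funext fun j => funext fun k => congrFun (hfac k).2 j)
  · intro ν _
    exact funext fun k => blockIncFactor_mul_blockPermFactor (ν k)
  · rintro ⟨σ, T⟩ _
    exact (hyperdetAt_term_mul_blockPerm σ T B).symm

end BlockExpansion

/-- Block Laplace expansion (Lemma on hyperdeterminant minors). -/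
theorem hyperdet_block_laplace (m l n : ℕ) (hm : Even m) (hm0 : 0 < m)
    (A : (Fin m → Fin (l * n)) → F) (I : Fin (l * n) → Fin (l * n)) :
    hyperdet m (l * n)
        (fun a => A fun k => if k = (⟨m - 1, by omega⟩ : Fin m) then I (a k) else a k)
    = ∑ σ : Fin m → Equiv.Perm (Fin (l * n)),
        if (∀ s, BlockInc l n (σ s)) ∧ σ (⟨m - 1, by omega⟩ : Fin m) = 1 then
          (∏ s, ((Equiv.Perm.sign (σ s) : ℤ) : F)) *
            ∏ j : Fin n,
              hyperdet m l (fun a : Fin m → Fin l =>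
                A fun k =>
                  if k = (⟨m - 1, by omega⟩ : Fin m) then I (blk l n j (a k))
                  else σ k (blk l n j (a k)))
        else 0 := by
  set last : Fin m := ⟨m - 1, by omega⟩
  rw [hyperdet_eq_hyperdetAt hm0, hyperdetAt_eq_of_even hm ⟨0, hm0⟩ last,
    hyperdetAt_eq_sum_blockInc]
  refine Finset.sum_congr rfl fun σ _ => ?_
  split_ifs with hσ
  · refine congrArg _ (Finset.prod_congr rfl fun j _ => ?_)
    rw [hyperdet_eq_hyperdetAt hm0, hyperdetAt_eq_of_even hm ⟨0, hm0⟩ last]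
    refine congrArg _ (funext fun a => congrArg A (funext fun k => ?_))
    split_ifs with hk
    · simp [hk, hσ.2]
    · rfl
  · rfl
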